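/- arXiv:2303.13811 — 9 statements merged into one kernel-verified Lean document; each statement's English description precedes it below -/
import Mathlib

section
/- Let X and Y be disjoint sets of Boolean variables and F a CNF formula over X ∪ Y. If a clause C ∈ F is blocked in F with respect to a variable x ∈ X, then C is redundant in ∃X.F, i.e., ∃X.(F\{C}) ≡ ∃X.F. -/
/-- An assignment `a` satisfies a clause (a finite set of literals, each literal
being a variable paired with its polarity) iff some literal evaluates to true. -/
def satClause {ν : Type*} (a : ν → Bool) (c : Finset (ν × Bool)) : Prop :=
  ∃ l ∈ c, a l.1 = l.2

/-- An assignment satisfies a CNF formula iff it satisfies every clause. -/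
def satCnf {ν : Type*} (a : ν → Bool) (F : Finset (Finset (ν × Bool))) : Prop :=
  ∀ c ∈ F, satClause a c

/-- Clauses `C'` and `C''` have opposite literals of the variable `u`. -/
def oppLit {ν : Type*} (C' C'' : Finset (ν × Bool)) (u : ν) : Prop :=
  ∃ b : Bool, (u, b) ∈ C' ∧ (u, !b) ∈ C''

/-- Clauses `C'` and `C''` are resolvable on `w`: they have opposite literals of
`w` and of no other variable. -/
def Resolvable {ν : Type*} (C' C'' : Finset (ν × Bool)) (w : ν) : Prop :=
  oppLit C' C'' w ∧ ∀ u : ν, oppLit C' C'' u → u = w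

/-- A clause `C` of `F` is blocked in `F` with respect to a variable `w`
occurring in `C` if no clause of `F` is resolvable with `C` on `w`. -/
def Blocked {ν : Type*} (F : Finset (Finset (ν × Bool)))
    (C : Finset (ν × Bool)) (w : ν) : Prop :=
  (∃ b : Bool, (w, b) ∈ C) ∧ ∀ C' ∈ F, ¬ Resolvable C C' w

/-- a clause `C ∈ F` blocked in `F` with respect to a quantified
variable `x ∈ X` is redundant in `∃X.F`, i.e. `∃X.(F∖{C}) ≡ ∃X.F`. -/
theorem blocked_clause_redundant {X Y : Type*} [DecidableEq X] [DecidableEq Y]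
    (F : Finset (Finset ((X ⊕ Y) × Bool)))
    (C : Finset ((X ⊕ Y) × Bool)) (hC : C ∈ F)
    (x : X) (hBlk : Blocked F C (Sum.inl x)) :
    ∀ y : Y → Bool,
      (∃ x' : X → Bool, satCnf (Sum.elim x' y) (F.erase C)) ↔
      (∃ x' : X → Bool, satCnf (Sum.elim x' y) F) := by
  intro y
  constructor
  · rintro ⟨x', hx'⟩
    by_cases hsat : satClause (Sum.elim x' y) C
    · refine ⟨x', fun c hc => ?_⟩
      by_cases h : c = C
      · exact h ▸ hsat
      · exact hx' c (Finset.mem_erase.mpr ⟨h, hc⟩)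
    · obtain ⟨b, hbC⟩ := hBlk.1
      have hfail : ∀ l ∈ C, Sum.elim x' y l.1 ≠ l.2 := by
        intro l hl hval
        exact hsat ⟨l, hl, hval⟩
      set x'' := Function.update x' x b with hx''
      have hkeep : ∀ u : X ⊕ Y, u ≠ Sum.inl x →
          Sum.elim x'' y u = Sum.elim x' y u := by
        intro u hu
        cases u with
        | inl a =>
          have ha : a ≠ x := fun h => hu (congrArg Sum.inl h)
          simp [hx'', Function.update_of_ne ha]
        | inr b => rfl
      have hxval : Sum.elim x'' y (Sum.inl x) = b := by
        simp [hx'']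
      refine ⟨x'', fun c hc => ?_⟩
      by_cases hc' : (Sum.inl x, !b) ∈ c
      · have hres := hBlk.2 c hc
        have hopp : oppLit C c (Sum.inl x) := ⟨b, hbC, hc'⟩
        rw [Resolvable, not_and] at hres
        have := hres hopp
        push_neg at this
        obtain ⟨u, ⟨b', hb'C, hb'c⟩, hu⟩ := this
        refine ⟨(u, !b'), hb'c, ?_⟩
        have h1 := hfail (u, b') hb'C
        have h2 : Sum.elim x' y u = !b' := by
          cases hb : Sum.elim x' y u <;> cases b' <;> simp_all
        rw [hkeep u hu, h2]
      · by_cases hcC : c = C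
        · exact ⟨(Sum.inl x, b), hcC ▸ hbC, hxval⟩
        · obtain ⟨l, hl, hval⟩ := hx' c (Finset.mem_erase.mpr ⟨hcC, hc⟩)
          refine ⟨l, hl, ?_⟩
          have hlx : l.1 ≠ Sum.inl x := by
            intro h
            have hxv : Sum.elim x' y (Sum.inl x) = l.2 := by rw [← h, hval]
            have hne : Sum.elim x' y (Sum.inl x) ≠ b := hfail (Sum.inl x, b) hbC
            have hne2 : l.2 ≠ b := fun he => hne (hxv.trans he)
            have hl2 : l.2 = !b := by
              cases hb2 : b <;> cases hl3 : l.2 <;> simp [hb2, hl3] at hne2 ⊢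
            apply hc'
            have heq : l = (Sum.inl x, !b) := Prod.ext h hl2
            exact heq ▸ hl
          rw [hkeep l.1 hlx, hval]
  · rintro ⟨x', hx'⟩
    exact ⟨x', fun c hc => hx' c (Finset.mem_of_mem_erase hc)⟩
end

section
/- Let M be a combinational circuit with internal variables X, input variables V, and output variables W, specified by a CNF formula F over X ∪ V ∪ W (satisfying the circuit conditions (i) and (ii)). Let B be a clause over W, C a clause of F, and H a formula over V such that ∃(X∪W).(F ∧ B) ≡ H ∧ ∃(X∪W).((F\{C}) ∧ B). Then for every clause Q of H and every full assignment v to V falsifying Q, the output M(v) of M under input v falsifies B. -/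
/-- let `F` specify a combinational circuit `M` with internal
variables `X`, inputs `V`, outputs `W` (circuit conditions (i) and (ii)),
`B` a clause over `W`, `C ∈ F`, and `H` over `V` a solution to the PQE problem
of taking `C` out of `∃(X∪W).(F ∧ B)`.  Then for every clause `Q` of `H` and
every input `v` falsifying `Q`, the (unique) output of `M` under `v`
falsifies `B`. -/
theorem property_mimicking_symbolic_simulation
    {X V W : Type*} [DecidableEq X] [DecidableEq V] [DecidableEq W]
    (F : Finset (Finset ((X ⊕ V ⊕ W) × Bool)))
    -- circuit condition (i): every input is extendable to a satisfying assignment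
    (hi : ∀ v : V → Bool, ∃ (x : X → Bool) (w : W → Bool),
        satCnf (Sum.elim x (Sum.elim v w)) F)
    -- circuit condition (ii): the output is determined by the input
    (hii : ∀ (x x' : X → Bool) (v : V → Bool) (w w' : W → Bool),
        satCnf (Sum.elim x (Sum.elim v w)) F →
        satCnf (Sum.elim x' (Sum.elim v w')) F → w = w')
    (B : Finset (W × Bool))
    (C : Finset ((X ⊕ V ⊕ W) × Bool)) (hC : C ∈ F)
    (H : Finset (Finset (V × Bool)))
    (hSol : ∀ v : V → Bool,
      (∃ (x : X → Bool) (w : W → Bool),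
          satCnf (Sum.elim x (Sum.elim v w)) F ∧ satClause w B) ↔
      (satCnf v H ∧ ∃ (x : X → Bool) (w : W → Bool),
          satCnf (Sum.elim x (Sum.elim v w)) (F.erase C) ∧ satClause w B)) :
    ∀ Q ∈ H, ∀ v : V → Bool, ¬ satClause v Q →
      ∀ (x : X → Bool) (w : W → Bool),
        satCnf (Sum.elim x (Sum.elim v w)) F → ¬ satClause w B := by
  intro Q hQ v hv x w hF hB
  have := (hSol v).mp ⟨x, w, hF, hB⟩
  exact hv (this.1 Q hQ)
end

section
/- Let X and Y be disjoint sets of Boolean variables, F a CNF formula over X ∪ Y, C ∈ F a clause, and H a set of clauses over Y. Then H is a solution to the PQE problem of taking C out of ∃X.F (i.e., ∃X.F ≡ H ∧ ∃X.(F\{C})) if and only if F ⊨ H and C is redundant in ∃X.(F ∪ H), i.e., ∃X.(F ∪ H) ≡ ∃X.((F ∪ H)\{C}). -/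
/-- A clause over the variables `Y` viewed as a clause over `X ∪ Y`. -/
def liftClause {X Y : Type*} [DecidableEq X] [DecidableEq Y]
    (c : Finset (Y × Bool)) : Finset ((X ⊕ Y) × Bool) :=
  c.image fun l => (Sum.inr l.1, l.2)

lemma satCnf_union {ν : Type*} [DecidableEq ν] (a : ν → Bool)
    (A B : Finset (Finset (ν × Bool))) :
    satCnf a (A ∪ B) ↔ satCnf a A ∧ satCnf a B := by
  simp only [satCnf, Finset.mem_union]
  constructor
  · intro h; exact ⟨fun c hc => h c (Or.inl hc), fun c hc => h c (Or.inr hc)⟩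
  · rintro ⟨h1, h2⟩ c (hc | hc); exacts [h1 c hc, h2 c hc]

lemma satClause_lift {X Y : Type*} [DecidableEq X] [DecidableEq Y]
    (x : X → Bool) (y : Y → Bool) (c : Finset (Y × Bool)) :
    satClause (Sum.elim x y) (liftClause (X := X) c) ↔ satClause y c := by
  constructor
  · rintro ⟨l, hl, hval⟩
    simp only [liftClause, Finset.mem_image] at hl
    obtain ⟨m, hm, rfl⟩ := hl
    exact ⟨m, hm, hval⟩
  · rintro ⟨l, hl, hval⟩
    exact ⟨(Sum.inr l.1, l.2), Finset.mem_image_of_mem _ hl, hval⟩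

lemma satCnf_lift {X Y : Type*} [DecidableEq X] [DecidableEq Y]
    (x : X → Bool) (y : Y → Bool) (H : Finset (Finset (Y × Bool))) :
    satCnf (Sum.elim x y) (H.image (liftClause (X := X))) ↔ satCnf y H := by
  simp only [satCnf, Finset.mem_image]
  constructor
  · intro h c hc
    exact (satClause_lift x y c).mp (h _ ⟨c, hc, rfl⟩)
  · rintro h c ⟨d, hd, rfl⟩
    exact (satClause_lift x y d).mpr (h d hd)

/-- `H` (a set of clauses over `Y`, with `C ∉ H`) is a solution to
the PQE problem of taking `C ∈ F` out of `∃X.F` iff `F ⊨ H` and `C` is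
redundant in `∃X.(F ∪ H)`. -/
theorem pqe_solution_iff_redundant {X Y : Type*} [DecidableEq X] [DecidableEq Y]
    (F : Finset (Finset ((X ⊕ Y) × Bool)))
    (C : Finset ((X ⊕ Y) × Bool)) (hC : C ∈ F)
    (H : Finset (Finset (Y × Bool)))
    (hCH : C ∉ H.image (liftClause (X := X))) :
    (∀ y : Y → Bool,
       (∃ x : X → Bool, satCnf (Sum.elim x y) F) ↔
       (satCnf y H ∧ ∃ x : X → Bool, satCnf (Sum.elim x y) (F.erase C)))
    ↔
    ((∀ (x : X → Bool) (y : Y → Bool), satCnf (Sum.elim x y) F → satCnf y H) ∧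
     (∀ y : Y → Bool,
       (∃ x : X → Bool,
          satCnf (Sum.elim x y) (F ∪ H.image (liftClause (X := X)))) ↔
       (∃ x : X → Bool,
          satCnf (Sum.elim x y) ((F ∪ H.image (liftClause (X := X))).erase C)))) := by
  set H' := H.image (liftClause (X := X)) with hH'
  have herase : (F ∪ H').erase C = F.erase C ∪ H' := by
    rw [Finset.erase_union_distrib, Finset.erase_eq_of_notMem hCH]
  constructor
  · intro h
    refine ⟨fun x y hxy => ((h y).mp ⟨x, hxy⟩).1, fun y => ?_⟩
    rw [herase]
    constructor
    · rintro ⟨x, hx⟩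
      rw [satCnf_union] at hx
      obtain ⟨hyH, x', hx'⟩ := (h y).mp ⟨x, hx.1⟩
      exact ⟨x', by rw [satCnf_union]; exact ⟨hx', (satCnf_lift x' y H).mpr hyH⟩⟩
    · rintro ⟨x, hx⟩
      rw [satCnf_union] at hx
      have hyH := (satCnf_lift x y H).mp hx.2
      obtain ⟨x', hx'⟩ := (h y).mpr ⟨hyH, x, hx.1⟩
      exact ⟨x', by rw [satCnf_union]; exact ⟨hx', (satCnf_lift x' y H).mpr hyH⟩⟩
  · rintro ⟨himp, hred⟩ y
    constructor
    · rintro ⟨x, hx⟩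
      have hyH := himp x y hx
      have : ∃ x : X → Bool, satCnf (Sum.elim x y) ((F ∪ H').erase C) :=
        (hred y).mp ⟨x, by rw [satCnf_union]; exact ⟨hx, (satCnf_lift x y H).mpr hyH⟩⟩
      obtain ⟨x', hx'⟩ := this
      rw [herase, satCnf_union] at hx'
      exact ⟨hyH, x', hx'.1⟩
    · rintro ⟨hyH, x, hx⟩
      have : ∃ x : X → Bool, satCnf (Sum.elim x y) (F ∪ H') :=
        (hred y).mpr ⟨x, by
          rw [herase, satCnf_union]; exact ⟨hx, (satCnf_lift x y H).mpr hyH⟩⟩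
      obtain ⟨x', hx'⟩ := this
      rw [satCnf_union] at hx'
      exact ⟨x', hx'.1⟩
end

section
/- (Correctness of the EG-PQE termination condition.) Let X and Y be disjoint sets of Boolean variables, F_ini a CNF formula over X ∪ Y, and C ∈ F_ini. Let H be a set of clauses over Y with F_ini ⊨ H, and let Plg be a set of clauses over Y such that for every full assignment y to Y falsifying some clause of Plg, the formula F_ini ∪ H is satisfiable in subspace y (i.e., there is a full assignment x to X with (x,y) satisfying F_ini ∪ H). If the formula Plg ∧ ((F_ini ∪ H)\{C}) ∧ ¬C is unsatisfiable, then H is a solution to the PQE problem of taking C out of ∃X.F_ini, i.e., ∃X.F_ini ≡ H ∧ ∃X.(F_ini\{C}). -/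
/-- correctness of the EG-PQE termination condition: if
`F_ini ⊨ H`, every full assignment `y` falsifying some plugging clause of `Plg`
makes `F_ini ∪ H` satisfiable in subspace `y`, and the formula
`Plg ∧ ((F_ini ∪ H)∖{C}) ∧ ¬C` is unsatisfiable, then `H` is a solution to the
PQE problem of taking `C` out of `∃X.F_ini`. -/
theorem eg_pqe_termination {X Y : Type*} [DecidableEq X] [DecidableEq Y]
    (Fini : Finset (Finset ((X ⊕ Y) × Bool)))
    (C : Finset ((X ⊕ Y) × Bool)) (hC : C ∈ Fini)
    (H Plg : Finset (Finset (Y × Bool)))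
    (hCH : C ∉ H.image (liftClause (X := X)))
    (hImp : ∀ (x : X → Bool) (y : Y → Bool),
        satCnf (Sum.elim x y) Fini → satCnf y H)
    (hPlg : ∀ y : Y → Bool, (∃ D ∈ Plg, ¬ satClause y D) →
        ∃ x : X → Bool,
          satCnf (Sum.elim x y) (Fini ∪ H.image (liftClause (X := X))))
    (hUnsat : ¬ ∃ (x : X → Bool) (y : Y → Bool),
        satCnf y Plg ∧
        satCnf (Sum.elim x y) ((Fini ∪ H.image (liftClause (X := X))).erase C) ∧
        ¬ satClause (Sum.elim x y) C) :
    ∀ y : Y → Bool,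
      (∃ x : X → Bool, satCnf (Sum.elim x y) Fini) ↔
      (satCnf y H ∧ ∃ x : X → Bool, satCnf (Sum.elim x y) (Fini.erase C)) := by
  intro y
  constructor
  · rintro ⟨x, hx⟩
    exact ⟨hImp x y hx, x, fun c hc => hx c (Finset.mem_of_mem_erase hc)⟩
  · rintro ⟨hy, x, hx⟩
    by_cases hcs : satClause (Sum.elim x y) C
    · refine ⟨x, fun c hc => ?_⟩
      rcases eq_or_ne c C with rfl | hne
      · exact hcs
      · exact hx c (Finset.mem_erase.mpr ⟨hne, hc⟩)
    · have hsat : satCnf (Sum.elim x y)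
          ((Fini ∪ H.image (liftClause (X := X))).erase C) := by
        intro c hc
        rcases Finset.mem_erase.mp hc with ⟨hne, hmem⟩
        rcases Finset.mem_union.mp hmem with h1 | h2
        · exact hx c (Finset.mem_erase.mpr ⟨hne, h1⟩)
        · obtain ⟨d, hd, rfl⟩ := Finset.mem_image.mp h2
          exact (satClause_lift x y d).mpr (hy d hd)
      have hnPlg : ¬ satCnf y Plg := fun hp => hUnsat ⟨x, y, hp, hsat, hcs⟩
      have : ∃ D ∈ Plg, ¬ satClause y D := by
        by_contra h
        push_neg at h
        exact hnPlg h
      obtain ⟨x', hx'⟩ := hPlg y this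
      exact ⟨x', fun c hc => hx' c (Finset.mem_union_left _ hc)⟩
end

section
/- (Interpolation is a special case of PQE.) Let A be a CNF formula over X ∪ Y and B a CNF formula over Y ∪ Z, where X, Y, Z are pairwise disjoint sets of Boolean variables, and suppose A ∧ B is unsatisfiable. Let W = X ∪ Z and let A* be a formula over Y with ∃W.(A ∧ B) ≡ A* ∧ ∃W.B. Then A* ∧ B is unsatisfiable (hence A ∧ B ≡ A* ∧ B); if in addition A ⊨ A*, then A* is an interpolant of the pair (A, B): A* depends only on the shared variables Y, A implies A*, and A* ∧ B is unsatisfiable. -/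
/-- interpolation as a special case of PQE: let `A` be over
`X ∪ Y`, `B` over `Y ∪ Z`, `A ∧ B` unsatisfiable, and `A*` (over `Y`) a
solution to the PQE problem of taking `A` out of `∃W.(A ∧ B)` with `W = X ∪ Z`.
Then `A* ∧ B` is unsatisfiable (hence `A ∧ B ≡ A* ∧ B`), and if moreover
`A ⊨ A*`, then `A*` is an interpolant of `(A, B)`: it depends only on the
shared variables `Y` (by construction), `A` implies it, and `A* ∧ B` is
unsatisfiable. -/
theorem interpolation_special_case_of_pqe {X Y Z : Type*}
    (A : Finset (Finset ((X ⊕ Y) × Bool)))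
    (B : Finset (Finset ((Y ⊕ Z) × Bool)))
    (Astar : Finset (Finset (Y × Bool)))
    (hUnsat : ¬ ∃ (x : X → Bool) (y : Y → Bool) (z : Z → Bool),
        satCnf (Sum.elim x y) A ∧ satCnf (Sum.elim y z) B)
    (hPQE : ∀ y : Y → Bool,
        (∃ (x : X → Bool) (z : Z → Bool),
            satCnf (Sum.elim x y) A ∧ satCnf (Sum.elim y z) B) ↔
        (satCnf y Astar ∧
          ∃ (x : X → Bool) (z : Z → Bool), satCnf (Sum.elim y z) B)) :
    (¬ ∃ (y : Y → Bool) (z : Z → Bool),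
        satCnf y Astar ∧ satCnf (Sum.elim y z) B) ∧
    (∀ (x : X → Bool) (y : Y → Bool) (z : Z → Bool),
        (satCnf (Sum.elim x y) A ∧ satCnf (Sum.elim y z) B) ↔
        (satCnf y Astar ∧ satCnf (Sum.elim y z) B)) ∧
    ((∀ (x : X → Bool) (y : Y → Bool),
        satCnf (Sum.elim x y) A → satCnf y Astar) →
      ((∀ (x : X → Bool) (y : Y → Bool),
          satCnf (Sum.elim x y) A → satCnf y Astar) ∧
       ¬ ∃ (y : Y → Bool) (z : Z → Bool),
          satCnf y Astar ∧ satCnf (Sum.elim y z) B)) := by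
  have h1 : ¬ ∃ (y : Y → Bool) (z : Z → Bool),
      satCnf y Astar ∧ satCnf (Sum.elim y z) B := by
    rintro ⟨y, z, hA, hB⟩
    obtain ⟨x, z', h⟩ := (hPQE y).mpr ⟨hA, fun _ => true, z, hB⟩
    exact hUnsat ⟨x, y, z', h⟩
  refine ⟨h1, fun x y z => ⟨fun h => (hUnsat ⟨x, y, z, h⟩).elim,
    fun h => (h1 ⟨y, z, h⟩).elim⟩, fun h => ⟨h, h1⟩⟩
end

section
/- (Equivalence checking by PQE.) Let N' be a single-output combinational circuit with internal variables X', input variables V', output variable w', specified by a CNF formula G' over X' ∪ V' ∪ {w'} satisfying the circuit conditions (i) and (ii), and computing the Boolean function f' on full assignments to V'; similarly let N'' with X'', V'', w'', G'', f''. Assume V' and V'' are disjoint copies of one another (with a fixed bijection), and let eq be a formula over V' ∪ V'' satisfied exactly by those assignments in which corresponding inputs of V' and V'' agree. Let Z = X' ∪ V' ∪ X'' ∪ V'' and let h be a formula over {w', w''} with ∃Z.(eq ∧ G' ∧ G'') ≡ h ∧ ∃Z.(G' ∧ G''). If h implies (w' ↔ w''), then N' and N'' are functionally equivalent: f'(v)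 = f''(v') for every pair of corresponding inputs v, v'. -/
/-- equivalence checking by PQE: let `G1`, `G2` specify
single-output combinational circuits `N'`, `N''` (the single output variable is
modelled by `Unit`, circuit conditions (i) and (ii)) computing `f1`, `f2`, let
`eqF` be satisfied exactly when corresponding inputs (via the bijection `e`)
agree, and let `h` (over `{w', w''}`) solve the PQE problem of taking `eqF` out
of `∃Z.(eq ∧ G' ∧ G'')` with `Z = X' ∪ V' ∪ X'' ∪ V''`.  If `h` implies
`w' ↔ w''`, then the circuits are functionally equivalent. -/
theorem equivalence_checking_by_pqe {X1 V1 X2 V2 : Type*}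
    (e : V1 ≃ V2)
    (G1 : Finset (Finset ((X1 ⊕ (V1 ⊕ Unit)) × Bool)))
    (G2 : Finset (Finset ((X2 ⊕ (V2 ⊕ Unit)) × Bool)))
    (eqF : Finset (Finset ((V1 ⊕ V2) × Bool)))
    (f1 : (V1 → Bool) → Bool) (f2 : (V2 → Bool) → Bool)
    -- circuit conditions (i) and (ii) for `N'`, and `f1` computes its output
    (hi1 : ∀ v : V1 → Bool, ∃ (x : X1 → Bool) (b : Bool),
        satCnf (Sum.elim x (Sum.elim v fun _ => b)) G1)
    (hii1 : ∀ (x x' : X1 → Bool) (v : V1 → Bool) (b b' : Bool),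
        satCnf (Sum.elim x (Sum.elim v fun _ => b)) G1 →
        satCnf (Sum.elim x' (Sum.elim v fun _ => b')) G1 → b = b')
    (hf1 : ∀ v : V1 → Bool, ∃ x : X1 → Bool,
        satCnf (Sum.elim x (Sum.elim v fun _ => f1 v)) G1)
    -- circuit conditions (i) and (ii) for `N''`, and `f2` computes its output
    (hi2 : ∀ v : V2 → Bool, ∃ (x : X2 → Bool) (b : Bool),
        satCnf (Sum.elim x (Sum.elim v fun _ => b)) G2)
    (hii2 : ∀ (x x' : X2 → Bool) (v : V2 → Bool) (b b' : Bool),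
        satCnf (Sum.elim x (Sum.elim v fun _ => b)) G2 →
        satCnf (Sum.elim x' (Sum.elim v fun _ => b')) G2 → b = b')
    (hf2 : ∀ v : V2 → Bool, ∃ x : X2 → Bool,
        satCnf (Sum.elim x (Sum.elim v fun _ => f2 v)) G2)
    -- `eqF` is satisfied exactly by assignments where corresponding inputs agree
    (heq : ∀ (v1 : V1 → Bool) (v2 : V2 → Bool),
        satCnf (Sum.elim v1 v2) eqF ↔ ∀ u : V1, v1 u = v2 (e u))
    (h : Finset (Finset ((Unit ⊕ Unit) × Bool)))
    -- `h` solves the PQE problem of taking `eqF` out of `∃Z.(eq ∧ G' ∧ G'')`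
    (hPQE : ∀ b1 b2 : Bool,
      (∃ (x1 : X1 → Bool) (v1 : V1 → Bool) (x2 : X2 → Bool) (v2 : V2 → Bool),
          satCnf (Sum.elim v1 v2) eqF ∧
          satCnf (Sum.elim x1 (Sum.elim v1 fun _ => b1)) G1 ∧
          satCnf (Sum.elim x2 (Sum.elim v2 fun _ => b2)) G2) ↔
      (satCnf (Sum.elim (fun _ => b1) (fun _ => b2) : Unit ⊕ Unit → Bool) h ∧
        ∃ (x1 : X1 → Bool) (v1 : V1 → Bool) (x2 : X2 → Bool) (v2 : V2 → Bool),
          satCnf (Sum.elim x1 (Sum.elim v1 fun _ => b1)) G1 ∧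
          satCnf (Sum.elim x2 (Sum.elim v2 fun _ => b2)) G2))
    -- `h` implies `w' ↔ w''`
    (hImp : ∀ b1 b2 : Bool,
        satCnf (Sum.elim (fun _ => b1) (fun _ => b2) : Unit ⊕ Unit → Bool) h →
        b1 = b2) :
    ∀ v1 : V1 → Bool, f1 v1 = f2 (fun u => v1 (e.symm u)) := by
  intro v1
  set v2 : V2 → Bool := fun u => v1 (e.symm u) with hv2
  obtain ⟨x1, hx1⟩ := hf1 v1
  obtain ⟨x2, hx2⟩ := hf2 v2
  have heqf : satCnf (Sum.elim v1 v2) eqF := by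
    rw [heq]; intro u; simp [hv2]
  have := (hPQE (f1 v1) (f2 v2)).mp ⟨x1, v1, x2, v2, heqf, hx1, hx2⟩
  exact hImp _ _ this.1
end

section
/- (Reachability diameter by PQE.) Let σ be a type of states, R : σ → σ → Prop a reflexive transition relation (reflexivity models stuttering), and I : σ → Prop a set of initial states. For n ∈ ℕ, say a state s is reachable in n transitions if there exist states s₀, …, s_n with I(s₀), s_n = s, and R(sᵢ, s_{i+1}) for all i < n. Let m ≥ 1 and suppose that every state reachable in m transitions is reachable in m transitions via a path s₀, …, s_m whose second state s₁ also satisfies I. Then the reachability diameter is less than m: every state reachable in some number of transitions is reachable in at most m − 1 transitions. -/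
/-- A state `s` is reachable in `n` transitions: there is a sequence
`s₀, …, s_n` with `I s₀`, `s_n = s`, and `R sᵢ s_{i+1}` for all `i < n`. -/
def ReachIn {σ : Type*} (R : σ → σ → Prop) (I : σ → Prop) (n : ℕ) (s : σ) : Prop :=
  ∃ f : ℕ → σ, I (f 0) ∧ f n = s ∧ ∀ i < n, R (f i) (f (i + 1))

/-- reachability diameter by PQE: let `R` be a reflexive
transition relation (stuttering) and `I` the initial states.  Let `m ≥ 1` and
suppose every state reachable in `m` transitions is reachable in `m`
transitions via a path whose second state also satisfies `I`.  Then the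
reachability diameter is less than `m`: every reachable state is reachable in
at most `m − 1` transitions. -/
theorem diameter_lt_of_second_state_initial {σ : Type*}
    (R : σ → σ → Prop) (I : σ → Prop)
    (hRefl : Reflexive R) (m : ℕ) (hm : 1 ≤ m)
    (h : ∀ s : σ, ReachIn R I m s →
      ∃ f : ℕ → σ, I (f 0) ∧ I (f 1) ∧ f m = s ∧ ∀ i < m, R (f i) (f (i + 1))) :
    ∀ s : σ, (∃ n : ℕ, ReachIn R I n s) → ∃ n ≤ m - 1, ReachIn R I n s := by
  -- Key step: shorten a path of length n ≥ m to length n - 1.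
  have key : ∀ n, m ≤ n → ∀ s : σ, ReachIn R I n s → ReachIn R I (n - 1) s := by
    intro n hmn s ⟨f, hI, hfn, hstep⟩
    have hRm : ReachIn R I m (f m) :=
      ⟨f, hI, rfl, fun i hi => hstep i (lt_of_lt_of_le hi hmn)⟩
    obtain ⟨g, hg0, hg1, hgm, hgstep⟩ := h (f m) hRm
    refine ⟨fun i => if i < m then g (i + 1) else f (i + 1), ?_, ?_, ?_⟩
    · simp only []
      rw [if_pos (show 0 < m from hm)]
      exact hg1
    · rcases eq_or_lt_of_le hmn with hEq | hlt
      · have : n - 1 < m := by omega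
        simp only [this, if_pos]
        rw [show n - 1 + 1 = m by omega, hgm, hEq]
        exact hfn
      · have : ¬ (n - 1 < m) := by omega
        simp only [this, if_neg, not_false_iff]
        rw [show n - 1 + 1 = n by omega]
        exact hfn
    · intro i hi
      by_cases h1 : i + 1 < m
      · have h0 : i < m := by omega
        simp only [h0, h1, if_pos]
        exact hgstep (i + 1) h1
      · by_cases h0 : i < m
        · have hi1 : i + 1 = m := by omega
          simp only [h0, if_pos, h1, if_neg, not_false_iff]
          rw [hi1, hgm]
          exact hstep m (by omega)
        · simp only [h0, h1, if_neg, not_false_iff]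
          exact hstep (i + 1) (by omega)
  intro s ⟨n, hn⟩
  induction n using Nat.strong_induction_on with
  | _ n ih =>
    by_cases hle : n ≤ m - 1
    · exact ⟨n, hle, hn⟩
    · exact ih (n - 1) (by omega) (key n (by omega) s hn)
end

section
/- (Local invariants from unrolling.) Let a sequential circuit be given by state variables S, an initial-state predicate I on full assignments to S, and a transition relation T(S', V, S'') over present-state, input, and next-state variables, represented as a CNF formula. For k ≥ 1 let F_k be the CNF formula I(S₀) ∧ T(S₀,V₀,S₁) ∧ … ∧ T(S_{k−1},V_{k−1},S_k) over the variables A_k ∪ S_k, where A_k = S₀ ∪ V₀ ∪ … ∪ S_{k−1} ∪ V_{k−1}. If H is a formula over S_k that is a solution to the PQE problem of taking a clause C ∈ F_k out of ∃A_k.F_k (i.e., ∃A_k.F_k ≡ H ∧ ∃A_k.(F_k\{C})), then every state reachable in k transitions satisfies H; equivalently, no state falsifying H can be reached in k transitions. -/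
set_option synthInstance.maxHeartbeats 1000000
set_option synthInstance.maxSize 1024

/-- local invariants from unrolling: let `F_k` be the CNF
formula `I(S₀) ∧ T(S₀,V₀,S₁) ∧ … ∧ T(S_{k−1},V_{k−1},S_k)` over the variables
`A_k ∪ S_k`, where `A_k = S₀ ∪ V₀ ∪ … ∪ S_{k−1} ∪ V_{k−1}` (the copies
`S₀,…,S_{k−1}` and `V₀,…,V_{k−1}` are modelled by `Fin k × S` and `Fin k × V`,
and the free copy `S_k` by `S`; the hypothesis `hFk` states that `F_k` has
exactly this meaning).  If `H` (over `S_k`) is a solution to the PQE problem of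
taking a clause `C ∈ F_k` out of `∃A_k.F_k`, then every state reachable in `k`
transitions satisfies `H`. -/
theorem local_invariant_from_unrolling {S V : Type*} [DecidableEq S] [DecidableEq V]
    (k : ℕ) (hk : 1 ≤ k)
    (I : (S → Bool) → Prop)
    (T : (S → Bool) → (V → Bool) → (S → Bool) → Prop)
    (Fk : Finset (Finset ((((Fin k × S) ⊕ (Fin k × V)) ⊕ S) × Bool)))
    (hFk : ∀ (a : ((Fin k × S) ⊕ (Fin k × V)) → Bool) (f : S → Bool),
      satCnf (Sum.elim a f) Fk ↔
        (I (fun s => a (Sum.inl (⟨0, hk⟩, s))) ∧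
         ∀ i : Fin k,
           T (fun s => a (Sum.inl (i, s)))
             (fun v => a (Sum.inr (i, v)))
             (fun s => if h : i.1 + 1 < k then a (Sum.inl (⟨i.1 + 1, h⟩, s))
                       else f s)))
    (C : Finset ((((Fin k × S) ⊕ (Fin k × V)) ⊕ S) × Bool)) (hC : C ∈ Fk)
    (H : Finset (Finset (S × Bool)))
    (hSol : ∀ f : S → Bool,
      (∃ a : ((Fin k × S) ⊕ (Fin k × V)) → Bool, satCnf (Sum.elim a f) Fk) ↔
      (satCnf f H ∧
        ∃ a : ((Fin k × S) ⊕ (Fin k × V)) → Bool,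
          satCnf (Sum.elim a f) (Fk.erase C))) :
    ∀ (st : ℕ → S → Bool) (inp : ℕ → V → Bool),
      I (st 0) → (∀ i < k, T (st i) (inp i) (st (i + 1))) →
      satCnf (st k) H := by
  intro st inp hI hT
  set a : ((Fin k × S) ⊕ (Fin k × V)) → Bool :=
    fun x => match x with
      | Sum.inl (i, s) => st i.1 s
      | Sum.inr (i, v) => inp i.1 v with ha
  have hsat : satCnf (Sum.elim a (st k)) Fk := by
    rw [hFk]
    constructor
    · exact hI
    · intro i
      have h := hT i.1 i.2
      have heq : (fun s => if h : i.1 + 1 < k then a (Sum.inl (⟨i.1 + 1, h⟩, s))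
          else st k s) = st (i.1 + 1) := by
        funext s
        split
        · rfl
        · have : i.1 + 1 = k := by omega
          rw [this]
      simpa [heq] using h
  exact ((hSol (st k)).mp ⟨a, hsat⟩).1
end

section
/- (Clause splitting yields a single-test property.) Let M be a single-output combinational circuit with internal variables X, input variables V = {v₁, …, v_p}, and output variable w, specified by a CNF formula F over X ∪ V ∪ {w} (circuit conditions (i) and (ii)), computing the Boolean function f on full assignments to V. Let C ∈ F, choose a literal l(vᵢ) of each input variable vᵢ, and let F' be the formula obtained from F by replacing C with the p+1 clauses C ∨ ¬l(v₁), …, C ∨ ¬l(v_p) and C_{p+1} = C ∨ l(v₁) ∨ … ∨ l(v_p). Let v_spl be the unique full assignment to V falsifying every literal l(vᵢ), and let B be the clause over V ∪ {w} falsified exactly by the assignment (v_spl, ¬f(v_spl)). Then B is a solution to the PQE problem of taking C_{p+1} out of ∃X.F', i.e., ∃X.F' ≡ B ∧ ∃X.(F'\{C_{p+1}}). -/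
/-!
Splitting `C` into the clauses `C ∨ ¬lᵢ` and `C ∨ l₁ ∨ … ∨ lₚ` does not change the set of
satisfying assignments, so `∃X.F' ≡ ∃X.F`. Every input other than `v_spl` satisfies some `lᵢ`,
hence `C_{p+1}`, so dropping `C_{p+1}` changes nothing there. At `v_spl` the circuit forces the
output `f(v_spl)`, which is exactly what `B` says about that input.
-/

open Finset

section Cnf

variable {ν : Type*} {a : ν → Bool}

theorem satClause_mono {c c' : Finset (ν × Bool)} (h : c ⊆ c') (hc : satClause a c) :
    satClause a c' :=
  let ⟨l, hl, hal⟩ := hc; ⟨l, h hl, hal⟩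

theorem satCnf_anti {F G : Finset (Finset (ν × Bool))} (h : F ⊆ G) (hG : satCnf a G) :
    satCnf a F :=
  fun c hc => hG c (h hc)

variable [DecidableEq ν]

theorem satCnf_of_satCnf_erase {F : Finset (Finset (ν × Bool))} {c : Finset (ν × Bool)}
    (hc : satClause a c) (hF : satCnf a (F.erase c)) : satCnf a F := by
  intro d hd
  by_cases hdc : d = c
  · exact hdc ▸ hc
  · exact hF d (mem_erase.mpr ⟨hdc, hd⟩)

variable {ι : Type*} [Fintype ι]

theorem satClause_union_image_of_apply_eq (C : Finset (ν × Bool)) (lit : ι → ν × Bool) (i : ι)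
    (h : a (lit i).1 = (lit i).2) : satClause a (C ∪ univ.image lit) :=
  ⟨lit i, mem_union_right _ (mem_image_of_mem _ (mem_univ i)), h⟩

def splitCnf (F : Finset (Finset (ν × Bool))) (C : Finset (ν × Bool)) (lit : ι → ν × Bool) :
    Finset (Finset (ν × Bool)) :=
  (F.erase C ∪ univ.image fun i => insert ((lit i).1, !(lit i).2) C) ∪ {C ∪ univ.image lit}

theorem satClause_of_satCnf_splitCnf {F : Finset (Finset (ν × Bool))} {C : Finset (ν × Bool)}
    {lit : ι → ν × Bool} (h : satCnf a (splitCnf F C lit)) : satClause a C := by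
  -- If some `lᵢ` holds, `C ∨ ¬lᵢ` reduces to `C`; otherwise `C ∨ l₁ ∨ … ∨ lₚ` does.
  by_cases hlit : ∃ i, a (lit i).1 = (lit i).2
  · obtain ⟨i, hi⟩ := hlit
    have hmem : insert ((lit i).1, !(lit i).2) C ∈ splitCnf F C lit := by
      simp only [splitCnf, mem_union, mem_image, mem_univ, true_and]
      exact .inl (.inr ⟨i, rfl⟩)
    obtain ⟨l, hl, hal⟩ := h _ hmem
    rcases mem_insert.mp hl with rfl | hlC
    · simp [hi] at hal
    · exact ⟨l, hlC, hal⟩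
  · obtain ⟨l, hl, hal⟩ := h (C ∪ univ.image lit) (by simp [splitCnf])
    rcases mem_union.mp hl with hlC | hlit'
    · exact ⟨l, hlC, hal⟩
    · obtain ⟨i, -, rfl⟩ := mem_image.mp hlit'
      exact absurd ⟨i, hal⟩ hlit

theorem satCnf_splitCnf_iff {F : Finset (Finset (ν × Bool))} {C : Finset (ν × Bool)}
    (hC : C ∈ F) (lit : ι → ν × Bool) : satCnf a (splitCnf F C lit) ↔ satCnf a F := by
  constructor
  · intro h
    refine satCnf_of_satCnf_erase (satClause_of_satCnf_splitCnf h) (satCnf_anti ?_ h)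
    exact subset_union_left.trans subset_union_left
  · intro h c hc
    have hCa : satClause a C := h C hC
    simp only [splitCnf, mem_union, mem_image, mem_univ, true_and, mem_singleton] at hc
    rcases hc with (hcF | ⟨i, rfl⟩) | rfl
    · exact h c (mem_of_mem_erase hcF)
    · exact satClause_mono (subset_insert _ _) hCa
    · exact satClause_mono subset_union_left hCa

end Cnf

theorem exists_apply_eq_iff_ne_not {V : Type*} (v pol : V → Bool) :
    (∃ u, v u = pol u) ↔ v ≠ fun u => !pol u := by
  simp only [Function.ne_iff, Bool.not_eq_not]

theorem satClause_blocking_iff {V : Type*} [DecidableEq V] [Fintype V] (pol : V → Bool)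
    (c : Bool) (v : V → Bool) (b : Bool) :
    satClause (Sum.elim v fun _ => b)
        ((univ.image fun u : V => ((Sum.inl u : V ⊕ Unit), pol u)) ∪ {(Sum.inr (), c)}) ↔
      (v ≠ fun u => !pol u) ∨ b = c := by
  rw [← exists_apply_eq_iff_ne_not]
  simp only [satClause, mem_union, mem_image, mem_univ, true_and, mem_singleton]
  constructor
  · rintro ⟨l, ⟨u, rfl⟩ | rfl, hl⟩
    exacts [.inl ⟨u, hl⟩, .inr hl]
  · rintro (⟨u, hu⟩ | rfl)
    exacts [⟨_, .inl ⟨u, rfl⟩, hu⟩, ⟨_, .inr rfl, rfl⟩]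

theorem clause_splitting_single_test_property_general
    {X V : Type*} [DecidableEq X] [DecidableEq V] [Fintype V]
    (F : Finset (Finset ((X ⊕ (V ⊕ Unit)) × Bool)))
    (f : (V → Bool) → Bool)
    -- circuit condition (ii)
    (hii : ∀ (x x' : X → Bool) (v : V → Bool) (b b' : Bool),
        satCnf (Sum.elim x (Sum.elim v fun _ => b)) F →
        satCnf (Sum.elim x' (Sum.elim v fun _ => b')) F → b = b')
    -- `f` computes the output of the circuit
    (hf : ∀ v : V → Bool, ∃ x : X → Bool,
        satCnf (Sum.elim x (Sum.elim v fun _ => f v)) F)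
    (C : Finset ((X ⊕ (V ⊕ Unit)) × Bool)) (hC : C ∈ F)
    (pol : V → Bool) :
    -- the clause `C_{p+1} = C ∨ l(v₁) ∨ … ∨ l(v_p)`
    let Cp1 : Finset ((X ⊕ (V ⊕ Unit)) × Bool) :=
      C ∪ Finset.univ.image fun u : V => ((Sum.inr (Sum.inl u), pol u))
    -- `F'`: `F` with `C` replaced by `C ∨ ¬l(v₁), …, C ∨ ¬l(v_p), C_{p+1}`
    let F' : Finset (Finset ((X ⊕ (V ⊕ Unit)) × Bool)) :=
      ((F.erase C) ∪
        Finset.univ.image fun u : V =>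
          insert ((Sum.inr (Sum.inl u) : X ⊕ (V ⊕ Unit)), !pol u) C) ∪ {Cp1}
    -- the input assignment falsifying every literal `l(vᵢ)`
    let vspl : V → Bool := fun u => !pol u
    -- the clause over `V ∪ {w}` falsified exactly by `(v_spl, ¬f(v_spl))`
    let B : Finset ((V ⊕ Unit) × Bool) :=
      (Finset.univ.image fun u : V => ((Sum.inl u : V ⊕ Unit), pol u)) ∪
        {(Sum.inr (), f vspl)}
    ∀ (v : V → Bool) (b : Bool),
      (∃ x : X → Bool, satCnf (Sum.elim x (Sum.elim v fun _ => b)) F') ↔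
      (satClause (Sum.elim v fun _ => b) B ∧
        ∃ x : X → Bool,
          satCnf (Sum.elim x (Sum.elim v fun _ => b)) (F'.erase Cp1)) := by
  intro Cp1 F' vspl B v b
  let lit : V → (X ⊕ (V ⊕ Unit)) × Bool := fun u => (Sum.inr (Sum.inl u), pol u)
  have hF' : ∀ x : X → Bool, satCnf (Sum.elim x (Sum.elim v fun _ => b)) F' ↔
      satCnf (Sum.elim x (Sum.elim v fun _ => b)) F := fun _ => satCnf_splitCnf_iff hC lit
  rw [satClause_blocking_iff]
  constructor
  · rintro ⟨x, hx⟩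
    obtain ⟨x₀, hx₀⟩ := hf v
    have hb : b = f v := hii x x₀ v b (f v) ((hF' x).mp hx) hx₀
    refine ⟨?_, x, satCnf_anti (erase_subset _ _) hx⟩
    by_cases hv : v = vspl
    · exact .inr (hv ▸ hb)
    · exact .inl hv
  · rintro ⟨hvb, x, hx⟩
    by_cases hv : v = vspl
    · have hb : b = f v := by rw [hv]; exact hvb.resolve_left (not_not_intro hv)
      obtain ⟨x₀, hx₀⟩ := hf v
      exact ⟨x₀, (hF' x₀).mpr (hb ▸ hx₀)⟩
    · obtain ⟨u, hu⟩ := (exists_apply_eq_iff_ne_not v pol).mpr hv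
      exact ⟨x, satCnf_of_satCnf_erase (satClause_union_image_of_apply_eq C lit u hu) hx⟩

/-- clause splitting yields a single-test property: let `F`
specify a single-output combinational circuit `M` (internal variables `X`,
finitely many input variables `V`, output variable `w` modelled by `Unit`;
circuit conditions (i) and (ii)) computing `f`.  Let `C ∈ F`, pick a literal
`l(vᵢ) = (vᵢ, pol vᵢ)` of each input variable, and let `F'` be `F` with `C`
replaced by the clauses `C ∨ ¬l(v₁), …, C ∨ ¬l(v_p)` and
`C_{p+1} = C ∨ l(v₁) ∨ … ∨ l(v_p)`.  Let `v_spl` be the unique input falsifying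
every `l(vᵢ)` and `B` the clause over `V ∪ {w}` falsified exactly by
`(v_spl, ¬f(v_spl))`.  Then `B` is a solution to the PQE problem of taking
`C_{p+1}` out of `∃X.F'`. -/
theorem clause_splitting_single_test_property
    {X V : Type*} [DecidableEq X] [DecidableEq V] [Fintype V]
    (F : Finset (Finset ((X ⊕ (V ⊕ Unit)) × Bool)))
    (f : (V → Bool) → Bool)
    -- circuit condition (i)
    (hi : ∀ v : V → Bool, ∃ (x : X → Bool) (b : Bool),
        satCnf (Sum.elim x (Sum.elim v fun _ => b)) F)
    -- circuit condition (ii)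
    (hii : ∀ (x x' : X → Bool) (v : V → Bool) (b b' : Bool),
        satCnf (Sum.elim x (Sum.elim v fun _ => b)) F →
        satCnf (Sum.elim x' (Sum.elim v fun _ => b')) F → b = b')
    -- `f` computes the output of the circuit
    (hf : ∀ v : V → Bool, ∃ x : X → Bool,
        satCnf (Sum.elim x (Sum.elim v fun _ => f v)) F)
    (C : Finset ((X ⊕ (V ⊕ Unit)) × Bool)) (hC : C ∈ F)
    (pol : V → Bool) :
    -- the clause `C_{p+1} = C ∨ l(v₁) ∨ … ∨ l(v_p)`
    let Cp1 : Finset ((X ⊕ (V ⊕ Unit)) × Bool) :=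
      C ∪ Finset.univ.image fun u : V => ((Sum.inr (Sum.inl u), pol u))
    -- `F'`: `F` with `C` replaced by `C ∨ ¬l(v₁), …, C ∨ ¬l(v_p), C_{p+1}`
    let F' : Finset (Finset ((X ⊕ (V ⊕ Unit)) × Bool)) :=
      ((F.erase C) ∪
        Finset.univ.image fun u : V =>
          insert ((Sum.inr (Sum.inl u) : X ⊕ (V ⊕ Unit)), !pol u) C) ∪ {Cp1}
    -- the input assignment falsifying every literal `l(vᵢ)`
    let vspl : V → Bool := fun u => !pol u
    -- the clause over `V ∪ {w}` falsified exactly by `(v_spl, ¬f(v_spl))`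
    let B : Finset ((V ⊕ Unit) × Bool) :=
      (Finset.univ.image fun u : V => ((Sum.inl u : V ⊕ Unit), pol u)) ∪
        {(Sum.inr (), f vspl)}
    ∀ (v : V → Bool) (b : Bool),
      (∃ x : X → Bool, satCnf (Sum.elim x (Sum.elim v fun _ => b)) F') ↔
      (satClause (Sum.elim v fun _ => b) B ∧
        ∃ x : X → Bool,
          satCnf (Sum.elim x (Sum.elim v fun _ => b)) (F'.erase Cp1)) :=
  clause_splitting_single_test_property_general F f hii hf C hC pol
end
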